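/- Let a, b, c, d be nonnegative integers with a + b = c + d + 1 and c + d > 0, and suppose it is not the case that d = 0, b > 0 and a is odd. Then the Octopus position [1^a, 2^b | 1^c, 2^d] with finger count 2 is an L-position: Left has a winning strategy whoever moves first. -/
import Mathlib


namespace Octopus

/-- An Octopus position: the multiset of Left's hand values and the
multiset of Right's hand values. -/
abbrev Pos : Type := Multiset ℕ × Multiset ℕ

/-- All hand values lie in `{1, ..., n}`, where `n` is the finger count. -/
def Valid (n : ℕ) (P : Pos) : Prop :=
  (∀ x ∈ P.1, 1 ≤ x ∧ x ≤ n) ∧ (∀ y ∈ P.2, 1 ≤ y ∧ y ≤ n)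

/-- A move of Left with finger count `n`: Left chooses an attacking hand `x` in
her multiset and a target hand `y` in Right's multiset; that copy of `y` is
replaced by `x + y`, or removed from play if `x + y > n`. -/
def LeftMove (n : ℕ) (P Q : Pos) : Prop :=
  ∃ x ∈ P.1, ∃ y ∈ P.2,
    Q.1 = P.1 ∧
    Q.2 = if x + y ≤ n then (x + y) ::ₘ P.2.erase y else P.2.erase y

/-- A move of Right with finger count `n`: Right chooses an attacking hand `y` in
his multiset and a target hand `x` in Left's multiset; that copy of `x` is
replaced by `x + y`, or removed from play if `x + y > n`. -/
def RightMove (n : ℕ) (P Q : Pos) : Prop :=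
  ∃ x ∈ P.1, ∃ y ∈ P.2,
    Q.2 = P.2 ∧
    Q.1 = if x + y ≤ n then (x + y) ::ₘ P.1.erase x else P.1.erase x

/-- `LeftWinsFirst n P`: Left, moving first from `P`, has a winning strategy
(normal play: a player with no move on their turn loses). -/
inductive LeftWinsFirst (n : ℕ) : Pos → Prop
  | intro (P Q : Pos) (hmove : LeftMove n P Q)
      (hwin : ∀ R, RightMove n Q R → LeftWinsFirst n R) : LeftWinsFirst n P

/-- `RightWinsFirst n P`: Right, moving first from `P`, has a winning strategy. -/
inductive RightWinsFirst (n : ℕ) : Pos → Prop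
  | intro (P Q : Pos) (hmove : RightMove n P Q)
      (hwin : ∀ R, LeftMove n Q R → RightWinsFirst n R) : RightWinsFirst n P

/-- Left, moving second from `P`, has a winning strategy. -/
def LeftWinsSecond (n : ℕ) (P : Pos) : Prop :=
  ∀ Q, RightMove n P Q → LeftWinsFirst n Q

/-- Right, moving second from `P`, has a winning strategy. -/
def RightWinsSecond (n : ℕ) (P : Pos) : Prop :=
  ∀ Q, LeftMove n P Q → RightWinsFirst n Q

/-- `N`-position: whichever player moves first wins. -/
def NPos (n : ℕ) (P : Pos) : Prop := LeftWinsFirst n P ∧ RightWinsFirst n P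

/-- `P`-position: whichever player moves second wins. -/
def PPos (n : ℕ) (P : Pos) : Prop := LeftWinsSecond n P ∧ RightWinsSecond n P

/-- `L`-position: Left wins whoever moves first. -/
def LPos (n : ℕ) (P : Pos) : Prop := LeftWinsFirst n P ∧ LeftWinsSecond n P

/-- `R`-position: Right wins whoever moves first. -/
def RPos (n : ℕ) (P : Pos) : Prop := RightWinsFirst n P ∧ RightWinsSecond n P

/-- The position `[1^a, 2^b | 1^c, 2^d]` (used with finger count 2). -/
def two (a b c d : ℕ) : Pos :=
  (Multiset.replicate a 1 + Multiset.replicate b 2,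
   Multiset.replicate c 1 + Multiset.replicate d 2)

/-! ### Auxiliary machinery for the finger-count-2 analysis -/

/-- Arithmetic characterization of "Left to move wins" for `[1^a,2^b|1^c,2^d]₂`. -/
def F (a b c d : ℕ) : Prop :=
  0 < c + d ∧
    ((c + d ≤ a + b ∧ ¬(a % 2 = 1 ∧ d = 0 ∧ a + b = c)) ∨
      (b = 0 ∧ c % 2 = 1 ∧ 1 ≤ d ∧ a + 1 = c + d))

/-- Every Right option from `(a,b,c,d)` lands in an `F`-position. -/
def G (a b c d : ℕ) : Prop :=
  (0 < a ∧ 0 < c → F (a - 1) (b + 1) c d) ∧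
  (0 < a ∧ 0 < d → F (a - 1) b c d) ∧
  (0 < b ∧ 0 < c + d → F a (b - 1) c d)

lemma K1 (a b c d : ℕ) (hF : F a b c d) :
    (0 < a ∧ 0 < c ∧ G a b (c - 1) (d + 1)) ∨
    (0 < a ∧ 0 < d ∧ G a b c (d - 1)) ∨
    (0 < b ∧ 0 < c ∧ G a b (c - 1) d) ∨
    (0 < b ∧ 0 < d ∧ G a b c (d - 1)) := by
  have hab : 0 < a + b := by unfold F at hF; omega
  rcases Nat.eq_zero_or_pos d with rfl | hd
  · have hc : 0 < c := by unfold F at hF; omega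
    rcases Nat.eq_zero_or_pos b with rfl | hb
    · exact Or.inl ⟨by omega, hc, by unfold G F at *; omega⟩
    · exact Or.inr (Or.inr (Or.inl ⟨hb, hc, by unfold G F at *; omega⟩))
  · rcases Nat.eq_zero_or_pos a with rfl | ha
    · exact Or.inr (Or.inr (Or.inr ⟨by omega, hd, by unfold G F at *; omega⟩))
    · by_cases hs : d = 1 ∧ a % 2 = 1 ∧ c + 1 = a + b ∧ 1 ≤ b
      · exact Or.inr (Or.inr (Or.inl ⟨by omega, by omega, by unfold G F at *; omega⟩))
      · exact Or.inr (Or.inl ⟨ha, hd, by unfold G F at *; omega⟩)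

lemma mem_one (a b : ℕ) :
    (1 : ℕ) ∈ Multiset.replicate a 1 + Multiset.replicate b 2 ↔ 0 < a := by
  simp [Multiset.mem_replicate]

lemma mem_two (a b : ℕ) :
    (2 : ℕ) ∈ Multiset.replicate a 1 + Multiset.replicate b 2 ↔ 0 < b := by
  simp [Multiset.mem_replicate]

lemma mem_cases {x a b : ℕ}
    (hx : x ∈ Multiset.replicate a 1 + Multiset.replicate b 2) :
    (x = 1 ∧ 0 < a) ∨ (x = 2 ∧ 0 < b) := by
  rcases Multiset.mem_add.1 hx with h | h
  · have h' := Multiset.mem_replicate.1 h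
    exact Or.inl ⟨h'.2, Nat.pos_of_ne_zero h'.1⟩
  · have h' := Multiset.mem_replicate.1 h
    exact Or.inr ⟨h'.2, Nat.pos_of_ne_zero h'.1⟩

lemma erase_one (a b : ℕ) (ha : 0 < a) :
    (Multiset.replicate a 1 + Multiset.replicate b 2).erase 1 =
      Multiset.replicate (a - 1) 1 + Multiset.replicate b 2 := by
  obtain ⟨a', rfl⟩ : ∃ a', a = a' + 1 := ⟨a - 1, by omega⟩
  rw [Multiset.replicate_succ, Multiset.cons_add, Multiset.erase_cons_head]
  simp

lemma erase_two (a b : ℕ) (hb : 0 < b) :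
    (Multiset.replicate a 1 + Multiset.replicate b 2).erase 2 =
      Multiset.replicate a 1 + Multiset.replicate (b - 1) 2 := by
  obtain ⟨b', rfl⟩ : ∃ b', b = b' + 1 := ⟨b - 1, by omega⟩
  rw [Multiset.replicate_succ, Multiset.add_cons, Multiset.erase_cons_head]
  simp

lemma cons_two (a b : ℕ) :
    (2 : ℕ) ::ₘ (Multiset.replicate a 1 + Multiset.replicate b 2) =
      Multiset.replicate a 1 + Multiset.replicate (b + 1) 2 := by
  rw [Multiset.replicate_succ, Multiset.add_cons]

/-- Decode a Right move from a standard position. -/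
lemma rightMove_decode {a b c d : ℕ} {R : Pos}
    (hR : RightMove 2 (two a b c d) R) :
    (0 < a ∧ 0 < c ∧ R = two (a - 1) (b + 1) c d) ∨
    (0 < a ∧ 0 < d ∧ R = two (a - 1) b c d) ∨
    (0 < b ∧ 0 < c + d ∧ R = two a (b - 1) c d) := by
  obtain ⟨x, hx, y, hy, h2, h1⟩ := hR
  have hx' := mem_cases hx
  have hy' := mem_cases hy
  have hRe : R = (R.1, R.2) := rfl
  rcases hx' with ⟨rfl, ha⟩ | ⟨rfl, hb⟩ <;> rcases hy' with ⟨rfl, hc⟩ | ⟨rfl, hd⟩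
  · refine Or.inl ⟨ha, hc, ?_⟩
    rw [hRe, h1, h2]
    simp only [two]
    rw [if_pos (by norm_num), erase_one _ _ ha, cons_two]
  · refine Or.inr (Or.inl ⟨ha, hd, ?_⟩)
    rw [hRe, h1, h2]
    simp only [two]
    rw [if_neg (by norm_num), erase_one _ _ ha]
  · refine Or.inr (Or.inr ⟨hb, by omega, ?_⟩)
    rw [hRe, h1, h2]
    simp only [two]
    rw [if_neg (by norm_num), erase_two _ _ hb]
  · refine Or.inr (Or.inr ⟨hb, by omega, ?_⟩)
    rw [hRe, h1, h2]
    simp only [two]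
    rw [if_neg (by norm_num), erase_two _ _ hb]

/-- The Left moves used by the strategy, as moves on standard positions. -/
lemma leftMove_11 {a b c d : ℕ} (ha : 0 < a) (hc : 0 < c) :
    LeftMove 2 (two a b c d) (two a b (c - 1) (d + 1)) := by
  refine ⟨1, (mem_one a b).2 ha, 1, (mem_one c d).2 hc, rfl, ?_⟩
  simp only [two]
  rw [if_pos (by norm_num), erase_one _ _ hc, cons_two]

lemma leftMove_12 {a b c d : ℕ} (ha : 0 < a) (hd : 0 < d) :
    LeftMove 2 (two a b c d) (two a b c (d - 1)) := by
  refine ⟨1, (mem_one a b).2 ha, 2, (mem_two c d).2 hd, rfl, ?_⟩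
  simp only [two]
  rw [if_neg (by norm_num), erase_two _ _ hd]

lemma leftMove_21 {a b c d : ℕ} (hb : 0 < b) (hc : 0 < c) :
    LeftMove 2 (two a b c d) (two a b (c - 1) d) := by
  refine ⟨2, (mem_two a b).2 hb, 1, (mem_one c d).2 hc, rfl, ?_⟩
  simp only [two]
  rw [if_neg (by norm_num), erase_one _ _ hc]

lemma leftMove_22 {a b c d : ℕ} (hb : 0 < b) (hd : 0 < d) :
    LeftMove 2 (two a b c d) (two a b c (d - 1)) := by
  refine ⟨2, (mem_two a b).2 hb, 2, (mem_two c d).2 hd, rfl, ?_⟩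
  simp only [two]
  rw [if_neg (by norm_num), erase_two _ _ hd]

/-- Bridge: the arithmetic predicate `F` implies Left wins moving first. -/
lemma bridge : ∀ N a b c d, 2 * (a + c) + b + d ≤ N → F a b c d →
    LeftWinsFirst 2 (two a b c d) := by
  intro N
  induction N with
  | zero =>
    intro a b c d hN hF
    exfalso
    have := hF.1
    omega
  | succ N ih =>
    intro a b c d hN hF
    have key : ∀ c' d', G a b c' d' → 2 * (a + c') + b + d' ≤ N →
        ∀ R, RightMove 2 (two a b c' d') R → LeftWinsFirst 2 R := by
      intro c' d' hG hμ R hR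
      rcases rightMove_decode hR with ⟨ha, hc, rfl⟩ | ⟨ha, hd, rfl⟩ | ⟨hb, hcd, rfl⟩
      · exact ih _ _ _ _ (by omega) (hG.1 ⟨ha, hc⟩)
      · exact ih _ _ _ _ (by omega) (hG.2.1 ⟨ha, hd⟩)
      · exact ih _ _ _ _ (by omega) (hG.2.2 ⟨hb, hcd⟩)
    rcases K1 a b c d hF with ⟨ha, hc, hG⟩ | ⟨ha, hd, hG⟩ | ⟨hb, hc, hG⟩ | ⟨hb, hd, hG⟩
    · exact .intro _ _ (leftMove_11 ha hc) (key _ _ hG (by omega))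
    · exact .intro _ _ (leftMove_12 ha hd) (key _ _ hG (by omega))
    · exact .intro _ _ (leftMove_21 hb hc) (key _ _ hG (by omega))
    · exact .intro _ _ (leftMove_22 hb hd) (key _ _ hG (by omega))

lemma F_winsFirst {a b c d : ℕ} (hF : F a b c d) :
    LeftWinsFirst 2 (two a b c d) :=
  bridge (2 * (a + c) + b + d) a b c d le_rfl hF

/-- for `a + b = c + d + 1` with `c + d > 0`, outside the
exceptional case (`d = 0`, `b > 0`, `a` odd), the position
`[1^a, 2^b | 1^c, 2^d]` with finger count 2 is an L-position. -/
theorem fingerTwo_L_oneMoreHand (a b c d : ℕ) (h : a + b = c + d + 1)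
    (h0 : 0 < c + d) (hexc : ¬ (d = 0 ∧ 0 < b ∧ Odd a)) :
    LPos 2 (two a b c d) := by
  have hexc' : ¬(d = 0 ∧ 0 < b ∧ a % 2 = 1) := by
    intro ⟨h1, h2, h3⟩
    exact hexc ⟨h1, h2, Nat.odd_iff.2 h3⟩
  constructor
  · exact F_winsFirst (by unfold F; omega)
  · intro Q hQ
    rcases rightMove_decode hQ with ⟨ha, hc, rfl⟩ | ⟨ha, hd, rfl⟩ | ⟨hb, hcd, rfl⟩
    · exact F_winsFirst (by unfold F; omega)
    · exact F_winsFirst (by unfold F; omega)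
    · exact F_winsFirst (by unfold F; omega)

end Octopus
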